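/- In the setting of the previous lemma (γ-contractive induced kernels with stationary distributions, constant I₂, expected one-step rewards g, average rewards η, bias vectors h), define for each policy pair the Q-value matrix Q_{π¹,π²}(s,a¹) = (∑_{a²} π²(s,a²) r(s,a¹,a²)) − η(π¹,π²) + ∑_{s'} (∑_{a²} π²(s,a²) P(s,a¹,a²,s')) · h_{π¹,π²}(s'). If (π¹_t, π²_t) and (π¹_{t−1}, π²_{t−1}) satisfy ‖π¹_t − π¹_{t−1}‖_∞ ≤ ρ₁ and ‖π²_t − π²_{t−1}‖_∞ ≤ ρ₂, then max_{s,a¹} |Q_{π¹_t,π²_t}(s,a¹) − Q_{π¹_{t−1},π²_{t−1}}(s,a¹)| ≤ C_{Q^π} + ρ₁ + 2ρ₂ + (ρ₁ + I₂·ρ₂ + 2ρ₂)/(1 − γ), where C_{Q^π} = 3·(ρ₁ + I₂·ρ₂)/(1 − γ)² + 2·(ρ₁ + ρ₂)/(1 − γ). -/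

import Mathlib

/-- A probability vector on a finite type: nonnegative entries summing to 1. -/
def IsProbVec {S : Type*} [Fintype S] (d : S → ℝ) : Prop :=
  (∀ s, 0 ≤ d s) ∧ ∑ s, d s = 1

/-- A policy: each row is a probability vector over actions. -/
def IsPolicy {S A : Type*} [Fintype A] (π : S → A → ℝ) : Prop :=
  ∀ s, (∀ a, 0 ≤ π s a) ∧ ∑ a, π s a = 1

/-- Maximum of a real-valued function over a nonempty finite type. -/
noncomputable def fmax {S : Type*} [Fintype S] [Nonempty S] (f : S → ℝ) : ℝ :=
  Finset.univ.sup' Finset.univ_nonempty f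

/-- Policy distance ‖π − π'‖_∞ = max_s ∑_a |π(s,a) − π'(s,a)|. -/
noncomputable def pdist {S A : Type*} [Fintype S] [Nonempty S] [Fintype A]
    (π π' : S → A → ℝ) : ℝ :=
  fmax (fun s => ∑ a, |π s a - π' s a|)

/-- Kernel distance ‖K − K'‖_∞ = max_s ∑_{s'} |K(s,s') − K'(s,s')|. -/
noncomputable def kdist {S : Type*} [Fintype S] [Nonempty S] (K K' : S → S → ℝ) : ℝ :=
  fmax (fun s => ∑ s', |K s s' - K' s s'|)

/-- The induced kernel P_{π₁,π₂}(s,s') = ∑_{a₁,a₂} π₁(s,a₁)·π₂(s,a₂)·P(s,a₁,a₂,s'). -/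
def kernel {S A₁ A₂ : Type*} [Fintype A₁] [Fintype A₂]
    (P : S → A₁ → A₂ → S → ℝ) (π₁ : S → A₁ → ℝ) (π₂ : S → A₂ → ℝ) : S → S → ℝ :=
  fun s s' => ∑ a₁, ∑ a₂, π₁ s a₁ * π₂ s a₂ * P s a₁ a₂ s'

/-- Row-vector–matrix multiplication: (d ⬝ K) s' = ∑ s, d s · K s s'. -/
def vmul {S : Type*} [Fintype S] (d : S → ℝ) (K : S → S → ℝ) : S → ℝ :=
  fun s' => ∑ s, d s * K s s'

/-- `iter d K m = d ⬝ K^m`. -/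
def iter {S : Type*} [Fintype S] (d : S → ℝ) (K : S → S → ℝ) : ℕ → S → ℝ
  | 0 => d
  | m + 1 => vmul (iter d K m) K

/-- L1 norm of a vector: ‖x‖₁ = ∑ s, |x s|. -/
def l1 {S : Type*} [Fintype S] (x : S → ℝ) : ℝ := ∑ s, |x s|

/-- Dot product x · v = ∑ s, x s · v s. -/
def dot {S : Type*} [Fintype S] (x v : S → ℝ) : ℝ := ∑ s, x s * v s

/-- The point-mass probability vector at `s`. -/
def pm {S : Type*} [DecidableEq S] (s : S) : S → ℝ := fun s' => if s' = s then 1 else 0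

/-- γ-contractivity. -/
def Contractive {S : Type*} [Fintype S] (γ : ℝ) (K : S → S → ℝ) : Prop :=
  ∀ d d' : S → ℝ, IsProbVec d → IsProbVec d' →
    l1 (fun s => vmul d K s - vmul d' K s) ≤ γ * l1 (fun s => d s - d' s)

/-- Expected one-step reward g_{π₁,π₂}(s) = ∑_{a₁,a₂} π₁(s,a₁)π₂(s,a₂)r(s,a₁,a₂). -/
def gfun {S A₁ A₂ : Type*} [Fintype A₁] [Fintype A₂]
    (r : S → A₁ → A₂ → ℝ) (π₁ : S → A₁ → ℝ) (π₂ : S → A₂ → ℝ) : S → ℝ :=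
  fun s => ∑ a₁, ∑ a₂, π₁ s a₁ * π₂ s a₂ * r s a₁ a₂

/-- Average reward η(π₁,π₂) = ∑_s d_{π₁,π₂}(s)·g_{π₁,π₂}(s). -/
def eta {S A₁ A₂ : Type*} [Fintype S] [Fintype A₁] [Fintype A₂]
    (r : S → A₁ → A₂ → ℝ) (dstat : (S → A₁ → ℝ) → (S → A₂ → ℝ) → S → ℝ)
    (π₁ : S → A₁ → ℝ) (π₂ : S → A₂ → ℝ) : ℝ :=
  ∑ s, dstat π₁ π₂ s * gfun r π₁ π₂ s

/-- Bias (value) vector h_{π₁,π₂}(s) = ∑_{m≥0} ((e_s ⬝ P_{π₁,π₂}^m)·g_{π₁,π₂} − η(π₁,π₂)). -/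
noncomputable def bias {S A₁ A₂ : Type*} [Fintype S] [DecidableEq S] [Fintype A₁] [Fintype A₂]
    (P : S → A₁ → A₂ → S → ℝ) (r : S → A₁ → A₂ → ℝ)
    (dstat : (S → A₁ → ℝ) → (S → A₂ → ℝ) → S → ℝ)
    (π₁ : S → A₁ → ℝ) (π₂ : S → A₂ → ℝ) : S → ℝ :=
  fun s => ∑' m : ℕ,
    (dot (iter (pm s) (kernel P π₁ π₂) m) (gfun r π₁ π₂) - eta r dstat π₁ π₂)

/-- Q-value matrix Q_{π₁,π₂}(s,a₁) = (∑_{a₂} π₂(s,a₂)r(s,a₁,a₂)) − η(π₁,π₂)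
  + ∑_{s'} (∑_{a₂} π₂(s,a₂)P(s,a₁,a₂,s'))·h_{π₁,π₂}(s'). -/
noncomputable def qval {S A₁ A₂ : Type*} [Fintype S] [DecidableEq S] [Fintype A₁] [Fintype A₂]
    (P : S → A₁ → A₂ → S → ℝ) (r : S → A₁ → A₂ → ℝ)
    (dstat : (S → A₁ → ℝ) → (S → A₂ → ℝ) → S → ℝ)
    (π₁ : S → A₁ → ℝ) (π₂ : S → A₂ → ℝ) : S → A₁ → ℝ :=
  fun s a₁ => (∑ a₂, π₂ s a₂ * r s a₁ a₂) - eta r dstat π₁ π₂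
    + ∑ s', (∑ a₂, π₂ s a₂ * P s a₁ a₂ s') * bias P r dstat π₁ π₂ s'


section Helpers

variable {S : Type*} [Fintype S]

lemma l1_nonneg (x : S → ℝ) : 0 ≤ l1 x :=
  Finset.sum_nonneg fun _ _ => abs_nonneg _

lemma le_fmax [Nonempty S] (f : S → ℝ) (s : S) : f s ≤ fmax f :=
  Finset.le_sup' f (Finset.mem_univ s)

lemma fmax_le [Nonempty S] {f : S → ℝ} {c : ℝ} (h : ∀ s, f s ≤ c) : fmax f ≤ c :=
  Finset.sup'_le _ _ fun s _ => h s

lemma pdist_nonneg' [Nonempty S] {A : Type*} [Fintype A] (π π' : S → A → ℝ) :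
    0 ≤ pdist π π' := by
  obtain ⟨s⟩ := ‹Nonempty S›
  refine le_trans ?_ (le_fmax (fun s => ∑ a, |π s a - π' s a|) s)
  exact Finset.sum_nonneg fun _ _ => abs_nonneg _

lemma row_le_kdist [Nonempty S] (K K' : S → S → ℝ) (s : S) :
    ∑ s', |K s s' - K' s s'| ≤ kdist K K' :=
  le_fmax (fun s => ∑ s', |K s s' - K' s s'|) s

lemma kdist_nonneg' [Nonempty S] (K K' : S → S → ℝ) : 0 ≤ kdist K K' := by
  obtain ⟨s⟩ := ‹Nonempty S›
  refine le_trans ?_ (row_le_kdist K K' s)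
  exact Finset.sum_nonneg fun _ _ => abs_nonneg _

lemma abs_dot_le (x v : S → ℝ) {c : ℝ} (hv : ∀ s, |v s| ≤ c) :
    |dot x v| ≤ l1 x * c := by
  calc |dot x v| ≤ ∑ s, |x s * v s| := Finset.abs_sum_le_sum_abs _ _
    _ ≤ ∑ s, |x s| * c := by
        refine Finset.sum_le_sum fun s _ => ?_
        rw [abs_mul]
        exact mul_le_mul_of_nonneg_left (hv s) (abs_nonneg _)
    _ = l1 x * c := by rw [l1, ← Finset.sum_mul]

lemma l1_of_prob {d : S → ℝ} (hd : IsProbVec d) : l1 d = 1 := by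
  rw [l1]
  rw [show ∑ s, |d s| = ∑ s, d s from Finset.sum_congr rfl fun s _ => abs_of_nonneg (hd.1 s)]
  exact hd.2

lemma l1_sub_prob_le_two {a b : S → ℝ} (ha : IsProbVec a) (hb : IsProbVec b) :
    l1 (fun s => a s - b s) ≤ 2 := by
  have h : ∀ s, |a s - b s| ≤ a s + b s := fun s => by
    rw [abs_sub_le_iff]
    constructor <;> nlinarith [ha.1 s, hb.1 s]
  calc l1 (fun s => a s - b s) ≤ ∑ s, (a s + b s) := Finset.sum_le_sum fun s _ => h s
    _ = 2 := by rw [Finset.sum_add_distrib, ha.2, hb.2]; norm_num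

lemma l1_triangle (f g h : S → ℝ) :
    l1 (fun s => f s - h s) ≤ l1 (fun s => f s - g s) + l1 (fun s => g s - h s) := by
  rw [l1, l1, l1, ← Finset.sum_add_distrib]
  exact Finset.sum_le_sum fun s _ => abs_sub_le _ _ _

lemma l1_add_le (f g : S → ℝ) :
    l1 (fun s => f s + g s) ≤ l1 f + l1 g := by
  rw [l1, l1, l1, ← Finset.sum_add_distrib]
  exact Finset.sum_le_sum fun s _ => abs_add_le _ _

lemma vmul_sub_eq (a b : S → ℝ) (K : S → S → ℝ) :
    (fun s' => vmul a K s' - vmul b K s') = vmul (fun s => a s - b s) K := by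
  funext s'
  simp [vmul, sub_mul, Finset.sum_sub_distrib]

lemma l1_vmul_sub_le [Nonempty S] (v : S → ℝ) (K K' : S → S → ℝ) :
    l1 (fun s' => vmul v K s' - vmul v K' s') ≤ l1 v * kdist K K' := by
  calc l1 (fun s' => vmul v K s' - vmul v K' s')
      = ∑ s', |∑ s, v s * (K s s' - K' s s')| := by
        simp [l1, vmul, mul_sub, Finset.sum_sub_distrib]
    _ ≤ ∑ s', ∑ s, |v s| * |K s s' - K' s s'| := by
        refine Finset.sum_le_sum fun s' _ => ?_
        refine (Finset.abs_sum_le_sum_abs _ _).trans ?_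
        exact le_of_eq (Finset.sum_congr rfl fun s _ => abs_mul _ _)
    _ = ∑ s, |v s| * ∑ s', |K s s' - K' s s'| := by
        rw [Finset.sum_comm]
        exact Finset.sum_congr rfl fun s _ => (Finset.mul_sum _ _ _).symm
    _ ≤ ∑ s, |v s| * kdist K K' := Finset.sum_le_sum fun s _ =>
        mul_le_mul_of_nonneg_left (row_le_kdist K K' s) (abs_nonneg _)
    _ = l1 v * kdist K K' := by rw [l1, Finset.sum_mul]

lemma contr_four {γ : ℝ} {K : S → S → ℝ} (hK : Contractive γ K)
    {a b c d : S → ℝ} (ha : IsProbVec a) (hb : IsProbVec b) (hc : IsProbVec c)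
    (hd : IsProbVec d) :
    l1 (fun s' => vmul a K s' + vmul c K s' - vmul b K s' - vmul d K s') ≤
      γ * l1 (fun s => a s + c s - b s - d s) := by
  have hup : IsProbVec (fun s => (a s + c s) / 2) := by
    constructor
    · intro s; have := ha.1 s; have := hc.1 s; positivity
    · rw [← Finset.sum_div, Finset.sum_add_distrib, ha.2, hc.2]; norm_num
  have hwp : IsProbVec (fun s => (b s + d s) / 2) := by
    constructor
    · intro s; have := hb.1 s; have := hd.1 s; positivity
    · rw [← Finset.sum_div, Finset.sum_add_distrib, hb.2, hd.2]; norm_num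
  have key := hK _ _ hup hwp
  have e1 : ∀ s', vmul (fun s => (a s + c s) / 2) K s' - vmul (fun s => (b s + d s) / 2) K s'
      = (vmul a K s' + vmul c K s' - vmul b K s' - vmul d K s') / 2 := by
    intro s'
    simp only [vmul, ← Finset.sum_add_distrib, ← Finset.sum_sub_distrib]
    rw [Finset.sum_div]
    exact Finset.sum_congr rfl fun s _ => by ring
  have hl1half : ∀ f : S → ℝ, l1 (fun s => f s / 2) = l1 f / 2 := by
    intro f; rw [l1, l1, Finset.sum_div]
    exact Finset.sum_congr rfl fun s _ => by rw [abs_div]; norm_num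
  have e2 : l1 (fun s' => vmul (fun s => (a s + c s) / 2) K s'
      - vmul (fun s => (b s + d s) / 2) K s')
      = l1 (fun s' => vmul a K s' + vmul c K s' - vmul b K s' - vmul d K s') / 2 := by
    rw [← hl1half]
    congr 1
    funext s'
    exact e1 s'
  have e3 : l1 (fun s => (a s + c s) / 2 - (b s + d s) / 2)
      = l1 (fun s => a s + c s - b s - d s) / 2 := by
    rw [← hl1half]
    congr 1
    funext s
    ring
  rw [e2, e3] at key
  linarith

lemma isProbVec_vmul {d : S → ℝ} {K : S → S → ℝ} (hd : IsProbVec d)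
    (hK : ∀ s, IsProbVec (K s)) : IsProbVec (vmul d K) := by
  constructor
  · intro s'
    exact Finset.sum_nonneg fun s _ => mul_nonneg (hd.1 s) ((hK s).1 s')
  · calc ∑ s', vmul d K s' = ∑ s, ∑ s', d s * K s s' := Finset.sum_comm
      _ = ∑ s, d s := Finset.sum_congr rfl fun s _ => by
          rw [← Finset.mul_sum, (hK s).2, mul_one]
      _ = 1 := hd.2

lemma isProbVec_iter {d : S → ℝ} {K : S → S → ℝ} (hd : IsProbVec d)
    (hK : ∀ s, IsProbVec (K s)) (m : ℕ) : IsProbVec (iter d K m) := by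
  induction m with
  | zero => exact hd
  | succ m ih => exact isProbVec_vmul ih hK

lemma isProbVec_pm [DecidableEq S] (s : S) : IsProbVec (pm s) := by
  constructor
  · intro s'; unfold pm; split <;> norm_num
  · simp [pm]

lemma l1_iter_sub {γ : ℝ} (hγ0 : 0 ≤ γ) {K : S → S → ℝ} (hK : Contractive γ K)
    (hKs : ∀ s, IsProbVec (K s)) {d e : S → ℝ} (hd : IsProbVec d) (he : IsProbVec e)
    (hstat : vmul d K = d) (m : ℕ) :
    l1 (fun s => iter e K m s - d s) ≤ γ ^ m * 2 := by
  induction m with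
  | zero => simpa [iter] using l1_sub_prob_le_two he hd
  | succ m ih =>
    have hiter : IsProbVec (iter e K m) := isProbVec_iter he hKs m
    have h1 : l1 (fun s => iter e K (m + 1) s - d s)
        ≤ γ * l1 (fun s => iter e K m s - d s) := by
      have := hK (iter e K m) d hiter hd
      rw [hstat] at this
      exact this
    calc l1 (fun s => iter e K (m + 1) s - d s) ≤ γ * (γ ^ m * 2) :=
          h1.trans (mul_le_mul_of_nonneg_left ih hγ0)
      _ = γ ^ (m + 1) * 2 := by ring

end Helpers

section Helpers2

variable {S A₁ A₂ : Type*} [Fintype S] [Fintype A₁] [Fintype A₂]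

lemma kernel_stochastic {P : S → A₁ → A₂ → S → ℝ} (hP : ∀ s a₁ a₂, IsProbVec (P s a₁ a₂))
    {π₁ : S → A₁ → ℝ} {π₂ : S → A₂ → ℝ} (h₁ : IsPolicy π₁) (h₂ : IsPolicy π₂) (s : S) :
    IsProbVec (kernel P π₁ π₂ s) := by
  constructor
  · intro s'
    exact Finset.sum_nonneg fun a₁ _ => Finset.sum_nonneg fun a₂ _ =>
      mul_nonneg (mul_nonneg ((h₁ s).1 a₁) ((h₂ s).1 a₂)) ((hP s a₁ a₂).1 s')
  · calc ∑ s', kernel P π₁ π₂ s s'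
        = ∑ a₁, ∑ s', ∑ a₂, π₁ s a₁ * π₂ s a₂ * P s a₁ a₂ s' := Finset.sum_comm
      _ = ∑ a₁, ∑ a₂, ∑ s', π₁ s a₁ * π₂ s a₂ * P s a₁ a₂ s' :=
          Finset.sum_congr rfl fun a₁ _ => Finset.sum_comm
      _ = ∑ a₁, ∑ a₂, π₁ s a₁ * π₂ s a₂ := by
          refine Finset.sum_congr rfl fun a₁ _ => Finset.sum_congr rfl fun a₂ _ => ?_
          rw [← Finset.mul_sum, (hP s a₁ a₂).2, mul_one]
      _ = (∑ a₁, π₁ s a₁) * ∑ a₂, π₂ s a₂ := by rw [Finset.sum_mul_sum]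
      _ = 1 := by rw [(h₁ s).2, (h₂ s).2, mul_one]

lemma gfun_abs_le_one {r : S → A₁ → A₂ → ℝ} (hr : ∀ s a₁ a₂, 0 ≤ r s a₁ a₂ ∧ r s a₁ a₂ ≤ 1)
    {π₁ : S → A₁ → ℝ} {π₂ : S → A₂ → ℝ} (h₁ : IsPolicy π₁) (h₂ : IsPolicy π₂) (s : S) :
    |gfun r π₁ π₂ s| ≤ 1 := by
  have h0 : 0 ≤ gfun r π₁ π₂ s :=
    Finset.sum_nonneg fun a₁ _ => Finset.sum_nonneg fun a₂ _ =>
      mul_nonneg (mul_nonneg ((h₁ s).1 a₁) ((h₂ s).1 a₂)) (hr s a₁ a₂).1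
  have h1 : gfun r π₁ π₂ s ≤ 1 := by
    calc gfun r π₁ π₂ s ≤ ∑ a₁, ∑ a₂, π₁ s a₁ * π₂ s a₂ := by
          refine Finset.sum_le_sum fun a₁ _ => Finset.sum_le_sum fun a₂ _ => ?_
          have hπ : 0 ≤ π₁ s a₁ * π₂ s a₂ := mul_nonneg ((h₁ s).1 a₁) ((h₂ s).1 a₂)
          nlinarith [(hr s a₁ a₂).2]
      _ = (∑ a₁, π₁ s a₁) * ∑ a₂, π₂ s a₂ := by rw [Finset.sum_mul_sum]
      _ = 1 := by rw [(h₁ s).2, (h₂ s).2, mul_one]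
  rw [abs_le]; exact ⟨by linarith, h1⟩

lemma gfun_diff_le [Nonempty S] {r : S → A₁ → A₂ → ℝ}
    (hr : ∀ s a₁ a₂, 0 ≤ r s a₁ a₂ ∧ r s a₁ a₂ ≤ 1)
    {π₁ π₁' : S → A₁ → ℝ} {π₂ π₂' : S → A₂ → ℝ}
    (h₁ : IsPolicy π₁) (h₁' : IsPolicy π₁') (h₂ : IsPolicy π₂) (h₂' : IsPolicy π₂') (s : S) :
    |gfun r π₁ π₂ s - gfun r π₁' π₂' s| ≤ pdist π₁ π₁' + pdist π₂ π₂' := by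
  have hsplit : gfun r π₁ π₂ s - gfun r π₁' π₂' s
      = (∑ a₁, ∑ a₂, (π₁ s a₁ - π₁' s a₁) * π₂ s a₂ * r s a₁ a₂)
      + (∑ a₁, ∑ a₂, π₁' s a₁ * (π₂ s a₂ - π₂' s a₂) * r s a₁ a₂) := by
    rw [gfun, gfun, ← Finset.sum_add_distrib, ← Finset.sum_sub_distrib]
    refine Finset.sum_congr rfl fun a₁ _ => ?_
    rw [← Finset.sum_add_distrib, ← Finset.sum_sub_distrib]
    exact Finset.sum_congr rfl fun a₂ _ => by ring
  have hb1 : |∑ a₁, ∑ a₂, (π₁ s a₁ - π₁' s a₁) * π₂ s a₂ * r s a₁ a₂| ≤ pdist π₁ π₁' := by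
    refine le_trans (Finset.abs_sum_le_sum_abs _ _) ?_
    refine le_trans ?_ (le_fmax (fun s => ∑ a, |π₁ s a - π₁' s a|) s)
    refine Finset.sum_le_sum fun a₁ _ => ?_
    refine le_trans (Finset.abs_sum_le_sum_abs _ _) ?_
    calc ∑ a₂, |(π₁ s a₁ - π₁' s a₁) * π₂ s a₂ * r s a₁ a₂|
        ≤ ∑ a₂, |π₁ s a₁ - π₁' s a₁| * π₂ s a₂ := by
          refine Finset.sum_le_sum fun a₂ _ => ?_
          rw [abs_mul, abs_mul, abs_of_nonneg ((h₂ s).1 a₂)]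
          have h2 := (h₂ s).1 a₂
          have h3 := (hr s a₁ a₂).1
          have h4 := (hr s a₁ a₂).2
          have h5 : |r s a₁ a₂| ≤ 1 := by rw [abs_of_nonneg h3]; exact h4
          exact mul_le_of_le_one_right (mul_nonneg (abs_nonneg _) h2) h5
      _ = |π₁ s a₁ - π₁' s a₁| := by rw [← Finset.mul_sum, (h₂ s).2, mul_one]
  have hb2 : |∑ a₁, ∑ a₂, π₁' s a₁ * (π₂ s a₂ - π₂' s a₂) * r s a₁ a₂| ≤ pdist π₂ π₂' := by
    refine le_trans (Finset.abs_sum_le_sum_abs _ _) ?_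
    refine le_trans ?_ (le_fmax (fun s => ∑ a, |π₂ s a - π₂' s a|) s)
    calc ∑ a₁, |∑ a₂, π₁' s a₁ * (π₂ s a₂ - π₂' s a₂) * r s a₁ a₂|
        ≤ ∑ a₁, ∑ a₂, π₁' s a₁ * |π₂ s a₂ - π₂' s a₂| := by
          refine Finset.sum_le_sum fun a₁ _ => ?_
          refine le_trans (Finset.abs_sum_le_sum_abs _ _) ?_
          refine Finset.sum_le_sum fun a₂ _ => ?_
          rw [abs_mul, abs_mul, abs_of_nonneg ((h₁' s).1 a₁)]
          have h3 := (hr s a₁ a₂).1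
          have h4 := (hr s a₁ a₂).2
          have h5 : |r s a₁ a₂| ≤ 1 := by rw [abs_of_nonneg h3]; exact h4
          exact mul_le_of_le_one_right (mul_nonneg ((h₁' s).1 a₁) (abs_nonneg _)) h5
      _ = (∑ a₁, π₁' s a₁) * ∑ a₂, |π₂ s a₂ - π₂' s a₂| := by
          rw [Finset.sum_mul_sum]
      _ = ∑ a₂, |π₂ s a₂ - π₂' s a₂| := by rw [(h₁' s).2, one_mul]
  calc |gfun r π₁ π₂ s - gfun r π₁' π₂' s|
      ≤ |∑ a₁, ∑ a₂, (π₁ s a₁ - π₁' s a₁) * π₂ s a₂ * r s a₁ a₂|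
      + |∑ a₁, ∑ a₂, π₁' s a₁ * (π₂ s a₂ - π₂' s a₂) * r s a₁ a₂| := by
        rw [hsplit]; exact abs_add_le _ _
    _ ≤ pdist π₁ π₁' + pdist π₂ π₂' := add_le_add hb1 hb2

lemma kdist_kernel_fst [Nonempty S] {P : S → A₁ → A₂ → S → ℝ}
    (hP : ∀ s a₁ a₂, IsProbVec (P s a₁ a₂))
    {π₁ π₁' : S → A₁ → ℝ} {π₂ : S → A₂ → ℝ} (h₂ : IsPolicy π₂) :
    kdist (kernel P π₁ π₂) (kernel P π₁' π₂) ≤ pdist π₁ π₁' := by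
  apply fmax_le
  intro s
  refine le_trans ?_ (le_fmax (fun s => ∑ a, |π₁ s a - π₁' s a|) s)
  calc ∑ s', |kernel P π₁ π₂ s s' - kernel P π₁' π₂ s s'|
      = ∑ s', |∑ a₁, ∑ a₂, (π₁ s a₁ - π₁' s a₁) * π₂ s a₂ * P s a₁ a₂ s'| := by
        refine Finset.sum_congr rfl fun s' _ => ?_
        congr 1
        rw [kernel, kernel, ← Finset.sum_sub_distrib]
        refine Finset.sum_congr rfl fun a₁ _ => ?_
        rw [← Finset.sum_sub_distrib]
        exact Finset.sum_congr rfl fun a₂ _ => by ring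
    _ ≤ ∑ s', ∑ a₁, ∑ a₂, |π₁ s a₁ - π₁' s a₁| * π₂ s a₂ * P s a₁ a₂ s' := by
        refine Finset.sum_le_sum fun s' _ => ?_
        refine le_trans (Finset.abs_sum_le_sum_abs _ _) ?_
        refine Finset.sum_le_sum fun a₁ _ => ?_
        refine le_trans (Finset.abs_sum_le_sum_abs _ _) ?_
        refine Finset.sum_le_sum fun a₂ _ => ?_
        rw [abs_mul, abs_mul, abs_of_nonneg ((h₂ s).1 a₂), abs_of_nonneg ((hP s a₁ a₂).1 s')]
    _ = ∑ a₁, ∑ a₂, ∑ s', |π₁ s a₁ - π₁' s a₁| * π₂ s a₂ * P s a₁ a₂ s' := by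
        rw [Finset.sum_comm]
        exact Finset.sum_congr rfl fun a₁ _ => Finset.sum_comm
    _ = ∑ a₁, ∑ a₂, |π₁ s a₁ - π₁' s a₁| * π₂ s a₂ := by
        refine Finset.sum_congr rfl fun a₁ _ => Finset.sum_congr rfl fun a₂ _ => ?_
        rw [← Finset.mul_sum, (hP s a₁ a₂).2, mul_one]
    _ = (∑ a₁, |π₁ s a₁ - π₁' s a₁|) * ∑ a₂, π₂ s a₂ := by rw [Finset.sum_mul_sum]
    _ = ∑ a₁, |π₁ s a₁ - π₁' s a₁| := by rw [(h₂ s).2, mul_one]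

lemma kdist_triangle' [Nonempty S] (K K' K'' : S → S → ℝ) :
    kdist K K'' ≤ kdist K K' + kdist K' K'' := by
  apply fmax_le
  intro s
  calc ∑ s', |K s s' - K'' s s'|
      ≤ ∑ s', (|K s s' - K' s s'| + |K' s s' - K'' s s'|) :=
        Finset.sum_le_sum fun s' _ => abs_sub_le _ _ _
    _ = (∑ s', |K s s' - K' s s'|) + ∑ s', |K' s s' - K'' s s'| := Finset.sum_add_distrib
    _ ≤ kdist K K' + kdist K' K'' := add_le_add (row_le_kdist _ _ s) (row_le_kdist _ _ s)

lemma abs_tsum_le_of_le {f g : ℕ → ℝ} (hg : Summable g) (h : ∀ n, |f n| ≤ g n) :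
    |∑' n, f n| ≤ ∑' n, g n := by
  have hf : Summable fun n => |f n| :=
    Summable.of_nonneg_of_le (fun n => abs_nonneg _) h hg
  have hf' : Summable f := by
    refine Summable.of_norm ?_
    simpa [Real.norm_eq_abs] using hf
  have hnorm : Summable fun n => ‖f n‖ := by simpa [Real.norm_eq_abs] using hf
  calc |∑' n, f n| = ‖∑' n, f n‖ := (Real.norm_eq_abs _).symm
    _ ≤ ∑' n, ‖f n‖ := norm_tsum_le_tsum_norm hnorm
    _ = ∑' n, |f n| := by simp [Real.norm_eq_abs]
    _ ≤ ∑' n, g n := Summable.tsum_le_tsum h hf hg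

lemma summable_coe_geo {γ : ℝ} (hγ0 : 0 ≤ γ) (hγ1 : γ < 1) :
    Summable (fun m : ℕ => (m : ℝ) * γ ^ m) := by
  have := summable_pow_mul_geometric_of_norm_lt_one (R := ℝ) 1
    (r := γ) (by rwa [Real.norm_eq_abs, abs_of_nonneg hγ0])
  exact this.congr fun n => by ring

lemma summable_nat_geo {γ : ℝ} (hγ0 : 0 ≤ γ) (hγ1 : γ < 1) :
    Summable (fun m : ℕ => (m : ℝ) * γ ^ (m - 1)) := by
  have h1 : Summable (fun m : ℕ => ((m : ℝ) + 1) * γ ^ m) := by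
    have h3 : Summable (fun m : ℕ => γ ^ m) := summable_geometric_of_lt_one hγ0 hγ1
    simpa [add_mul] using (summable_coe_geo hγ0 hγ1).add h3
  have e : ∀ n : ℕ, ((n : ℝ) + 1) * γ ^ n = ((n + 1 : ℕ) : ℝ) * γ ^ ((n + 1) - 1) := by
    intro n
    simp [Nat.add_sub_cancel]
  exact (summable_nat_add_iff 1).mp (h1.congr e)

lemma tsum_nat_geo {γ : ℝ} (hγ0 : 0 ≤ γ) (hγ1 : γ < 1) :
    ∑' m : ℕ, (m : ℝ) * γ ^ (m - 1) = 1 / (1 - γ) ^ 2 := by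
  have h1γ : (0:ℝ) < 1 - γ := by linarith
  have hs := summable_nat_geo hγ0 hγ1
  rw [Summable.tsum_eq_zero_add hs]
  have e : ∀ m : ℕ, ((m + 1 : ℕ) : ℝ) * γ ^ ((m + 1) - 1) = (m : ℝ) * γ ^ m + γ ^ m := by
    intro m
    simp [Nat.add_sub_cancel]
    ring
  rw [tsum_congr e]
  rw [Summable.tsum_add (summable_coe_geo hγ0 hγ1) (summable_geometric_of_lt_one hγ0 hγ1)]
  rw [tsum_coe_mul_geometric_of_norm_lt_one
    (by rwa [Real.norm_eq_abs, abs_of_nonneg hγ0] : ‖γ‖ < 1),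
    tsum_geometric_of_lt_one hγ0 hγ1]
  field_simp
  ring

end Helpers2

set_option maxHeartbeats 1000000 in
/-- Lemma 6 of the paper: the change of consecutive Q-values is bounded by
C_{Q^π} + ρ₁ + 2ρ₂ + (ρ₁ + I₂ρ₂ + 2ρ₂)/(1−γ), with
C_{Q^π} = 3(ρ₁ + I₂ρ₂)/(1−γ)² + 2(ρ₁+ρ₂)/(1−γ). -/
theorem stmt_13 {S A₁ A₂ : Type*} [Fintype S] [Nonempty S] [DecidableEq S]
    [Fintype A₁] [Nonempty A₁] [Fintype A₂] [Nonempty A₂]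
    (P : S → A₁ → A₂ → S → ℝ) (hP : ∀ s a₁ a₂, IsProbVec (P s a₁ a₂))
    (r : S → A₁ → A₂ → ℝ) (hr : ∀ s a₁ a₂, 0 ≤ r s a₁ a₂ ∧ r s a₁ a₂ ≤ 1)
    (γ : ℝ) (hγ0 : 0 ≤ γ) (hγ1 : γ < 1)
    (hcontr : ∀ (π₁ : S → A₁ → ℝ) (π₂ : S → A₂ → ℝ), IsPolicy π₁ → IsPolicy π₂ →
      Contractive γ (kernel P π₁ π₂))
    (dstat : (S → A₁ → ℝ) → (S → A₂ → ℝ) → S → ℝ)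
    (hdstat : ∀ (π₁ : S → A₁ → ℝ) (π₂ : S → A₂ → ℝ), IsPolicy π₁ → IsPolicy π₂ →
      IsProbVec (dstat π₁ π₂) ∧ vmul (dstat π₁ π₂) (kernel P π₁ π₂) = dstat π₁ π₂)
    (I₂ : ℝ) (hI₂0 : 0 ≤ I₂)
    (hinfl : ∀ (π₁ : S → A₁ → ℝ) (π₂ π₂' : S → A₂ → ℝ),
      IsPolicy π₁ → IsPolicy π₂ → IsPolicy π₂' →
      kdist (kernel P π₁ π₂) (kernel P π₁ π₂') ≤ I₂ * pdist π₂ π₂')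
    (ρ₁ ρ₂ : ℝ)
    (π₁t π₁p : S → A₁ → ℝ) (hπ₁t : IsPolicy π₁t) (hπ₁p : IsPolicy π₁p)
    (π₂t π₂p : S → A₂ → ℝ) (hπ₂t : IsPolicy π₂t) (hπ₂p : IsPolicy π₂p)
    (hρ₁ : pdist π₁t π₁p ≤ ρ₁) (hρ₂ : pdist π₂t π₂p ≤ ρ₂) :
    ∀ s a₁, |qval P r dstat π₁t π₂t s a₁ - qval P r dstat π₁p π₂p s a₁| ≤
      (3 * (ρ₁ + I₂ * ρ₂) / (1 - γ) ^ 2 + 2 * (ρ₁ + ρ₂) / (1 - γ))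
        + ρ₁ + 2 * ρ₂ + (ρ₁ + I₂ * ρ₂ + 2 * ρ₂) / (1 - γ) := by
  intro s a₁
  have hρ₁0 : 0 ≤ ρ₁ := le_trans (pdist_nonneg' _ _) hρ₁
  have hρ₂0 : 0 ≤ ρ₂ := le_trans (pdist_nonneg' _ _) hρ₂
  have h1γ : (0:ℝ) < 1 - γ := by linarith
  have hΔ0 : 0 ≤ ρ₁ + I₂ * ρ₂ := add_nonneg hρ₁0 (mul_nonneg hI₂0 hρ₂0)
  obtain ⟨hdtP, hdtS⟩ := hdstat π₁t π₂t hπ₁t hπ₂t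
  obtain ⟨hdpP, hdpS⟩ := hdstat π₁p π₂p hπ₁p hπ₂p
  have hKtS : ∀ u, IsProbVec (kernel P π₁t π₂t u) := kernel_stochastic hP hπ₁t hπ₂t
  have hKpS : ∀ u, IsProbVec (kernel P π₁p π₂p u) := kernel_stochastic hP hπ₁p hπ₂p
  have hcT := hcontr π₁t π₂t hπ₁t hπ₂t
  have hcP := hcontr π₁p π₂p hπ₁p hπ₂p
  -- kernel distance bound
  have hKd : kdist (kernel P π₁t π₂t) (kernel P π₁p π₂p) ≤ ρ₁ + I₂ * ρ₂ := by
    refine le_trans (kdist_triangle' _ (kernel P π₁p π₂t) _) ?_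
    have h1 : kdist (kernel P π₁t π₂t) (kernel P π₁p π₂t) ≤ pdist π₁t π₁p :=
      kdist_kernel_fst hP hπ₂t
    have h2 := hinfl π₁p π₂t π₂p hπ₁p hπ₂t hπ₂p
    have h3 : I₂ * pdist π₂t π₂p ≤ I₂ * ρ₂ := mul_le_mul_of_nonneg_left hρ₂ hI₂0
    linarith [h1.trans hρ₁]
  -- stationary distribution distance bound
  have hdd : l1 (fun u => dstat π₁t π₂t u - dstat π₁p π₂p u) ≤ (ρ₁ + I₂ * ρ₂) / (1 - γ) := by
    have e : (fun u => dstat π₁t π₂t u - dstat π₁p π₂p u)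
        = fun u => vmul (dstat π₁t π₂t) (kernel P π₁t π₂t) u
          - vmul (dstat π₁p π₂p) (kernel P π₁p π₂p) u := by
      simp only [hdtS, hdpS]
    have key : l1 (fun u => dstat π₁t π₂t u - dstat π₁p π₂p u)
        ≤ γ * l1 (fun u => dstat π₁t π₂t u - dstat π₁p π₂p u) + (ρ₁ + I₂ * ρ₂) := by
      calc l1 (fun u => dstat π₁t π₂t u - dstat π₁p π₂p u)
          = l1 (fun u => vmul (dstat π₁t π₂t) (kernel P π₁t π₂t) u
              - vmul (dstat π₁p π₂p) (kernel P π₁p π₂p) u) := by rw [← e]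
        _ ≤ l1 (fun u => vmul (dstat π₁t π₂t) (kernel P π₁t π₂t) u
              - vmul (dstat π₁p π₂p) (kernel P π₁t π₂t) u)
            + l1 (fun u => vmul (dstat π₁p π₂p) (kernel P π₁t π₂t) u
              - vmul (dstat π₁p π₂p) (kernel P π₁p π₂p) u) := l1_triangle _ _ _
        _ ≤ γ * l1 (fun u => dstat π₁t π₂t u - dstat π₁p π₂p u) + (ρ₁ + I₂ * ρ₂) := by
            refine add_le_add (hcT _ _ hdtP hdpP) ?_
            refine le_trans (l1_vmul_sub_le _ _ _) ?_
            rw [l1_of_prob hdpP, one_mul]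
            exact hKd
    rw [le_div_iff₀ h1γ]
    nlinarith [key]
  -- pointwise term identity and bound
  have hterm : ∀ (π₁ : S → A₁ → ℝ) (π₂ : S → A₂ → ℝ) (s0 : S) (m : ℕ),
      dot (iter (pm s0) (kernel P π₁ π₂) m) (gfun r π₁ π₂) - eta r dstat π₁ π₂
      = dot (fun s' => iter (pm s0) (kernel P π₁ π₂) m s' - dstat π₁ π₂ s')
          (gfun r π₁ π₂) := by
    intro π₁ π₂ s0 m
    rw [dot, dot, eta, ← Finset.sum_sub_distrib]

    exact Finset.sum_congr rfl fun s' _ => by ring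
  have htermabs : ∀ (π₁ : S → A₁ → ℝ) (π₂ : S → A₂ → ℝ), IsPolicy π₁ → IsPolicy π₂ →
      ∀ (s0 : S) (m : ℕ),
      |dot (iter (pm s0) (kernel P π₁ π₂) m) (gfun r π₁ π₂) - eta r dstat π₁ π₂|
        ≤ γ ^ m * 2 := by
    intro π₁ π₂ h₁ h₂ s0 m
    obtain ⟨hdP, hdS⟩ := hdstat π₁ π₂ h₁ h₂
    rw [hterm π₁ π₂ s0 m]
    refine le_trans (abs_dot_le _ _ (gfun_abs_le_one hr h₁ h₂)) ?_
    rw [mul_one]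
    exact l1_iter_sub hγ0 (hcontr π₁ π₂ h₁ h₂) (kernel_stochastic hP h₁ h₂) hdP
      (isProbVec_pm s0) hdS m
  have hgeo2 : Summable (fun m : ℕ => γ ^ m * 2) :=
    (summable_geometric_of_lt_one hγ0 hγ1).mul_right 2
  have hsumm : ∀ (π₁ : S → A₁ → ℝ) (π₂ : S → A₂ → ℝ), IsPolicy π₁ → IsPolicy π₂ →
      ∀ s0 : S, Summable (fun m : ℕ =>
        dot (iter (pm s0) (kernel P π₁ π₂) m) (gfun r π₁ π₂) - eta r dstat π₁ π₂) := by
    intro π₁ π₂ h₁ h₂ s0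
    refine Summable.of_norm (Summable.of_nonneg_of_le (fun m => norm_nonneg _)
      (fun m => ?_) hgeo2)
    simpa [Real.norm_eq_abs] using htermabs π₁ π₂ h₁ h₂ s0 m
  have hbiasabs : ∀ (π₁ : S → A₁ → ℝ) (π₂ : S → A₂ → ℝ), IsPolicy π₁ → IsPolicy π₂ →
      ∀ s0 : S, |bias P r dstat π₁ π₂ s0| ≤ 2 / (1 - γ) := by
    intro π₁ π₂ h₁ h₂ s0
    rw [bias]
    refine le_trans (abs_tsum_le_of_le hgeo2 (htermabs π₁ π₂ h₁ h₂ s0)) ?_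
    rw [tsum_mul_right, tsum_geometric_of_lt_one hγ0 hγ1]
    exact le_of_eq (by ring)
  -- bound on the l1 distance of the coupled iterates
  have hzb : ∀ (s0 : S) (m : ℕ),
      l1 (fun s' => (iter (pm s0) (kernel P π₁t π₂t) m s' - dstat π₁t π₂t s')
          - (iter (pm s0) (kernel P π₁p π₂p) m s' - dstat π₁p π₂p s'))
      ≤ γ ^ m * ((ρ₁ + I₂ * ρ₂) / (1 - γ)) + 2 * (m : ℝ) * γ ^ (m - 1) * (ρ₁ + I₂ * ρ₂) := by
    intro s0 m
    induction m with
    | zero =>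
      have e0 : (fun s' => (iter (pm s0) (kernel P π₁t π₂t) 0 s' - dstat π₁t π₂t s')
          - (iter (pm s0) (kernel P π₁p π₂p) 0 s' - dstat π₁p π₂p s'))
          = fun s' => dstat π₁p π₂p s' - dstat π₁t π₂t s' := by
        funext s'
        show (pm s0 s' - dstat π₁t π₂t s') - (pm s0 s' - dstat π₁p π₂p s')
          = dstat π₁p π₂p s' - dstat π₁t π₂t s'
        ring
      rw [e0]
      have e1 : l1 (fun s' => dstat π₁p π₂p s' - dstat π₁t π₂t s')
          = l1 (fun s' => dstat π₁t π₂t s' - dstat π₁p π₂p s') := by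
        rw [l1, l1]
        exact Finset.sum_congr rfl fun s' _ => abs_sub_comm _ _
      rw [e1]
      simpa using hdd
    | succ m ih =>
      have hxm : IsProbVec (iter (pm s0) (kernel P π₁t π₂t) m) :=
        isProbVec_iter (isProbVec_pm s0) hKtS m
      have hym : IsProbVec (iter (pm s0) (kernel P π₁p π₂p) m) :=
        isProbVec_iter (isProbVec_pm s0) hKpS m
      have hdec : (fun s' => (iter (pm s0) (kernel P π₁t π₂t) (m+1) s' - dstat π₁t π₂t s')
          - (iter (pm s0) (kernel P π₁p π₂p) (m+1) s' - dstat π₁p π₂p s'))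
          = fun s' =>
            (vmul (iter (pm s0) (kernel P π₁t π₂t) m) (kernel P π₁t π₂t) s'
              + vmul (dstat π₁p π₂p) (kernel P π₁t π₂t) s'
              - vmul (dstat π₁t π₂t) (kernel P π₁t π₂t) s'
              - vmul (iter (pm s0) (kernel P π₁p π₂p) m) (kernel P π₁t π₂t) s')
            + (vmul (fun u => iter (pm s0) (kernel P π₁p π₂p) m u - dstat π₁p π₂p u)
                (kernel P π₁t π₂t) s'
              - vmul (fun u => iter (pm s0) (kernel P π₁p π₂p) m u - dstat π₁p π₂p u)
                (kernel P π₁p π₂p) s') := by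
        funext s'
        have h3 : vmul (dstat π₁t π₂t) (kernel P π₁t π₂t) s' = dstat π₁t π₂t s' :=
          congrFun hdtS s'
        have h4 : vmul (dstat π₁p π₂p) (kernel P π₁p π₂p) s' = dstat π₁p π₂p s' :=
          congrFun hdpS s'
        have h5 : vmul (fun u => iter (pm s0) (kernel P π₁p π₂p) m u - dstat π₁p π₂p u)
            (kernel P π₁t π₂t) s'
            = vmul (iter (pm s0) (kernel P π₁p π₂p) m) (kernel P π₁t π₂t) s'
              - vmul (dstat π₁p π₂p) (kernel P π₁t π₂t) s' :=
          (congrFun (vmul_sub_eq (iter (pm s0) (kernel P π₁p π₂p) m) (dstat π₁p π₂p)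
            (kernel P π₁t π₂t)) s').symm
        have h6 : vmul (fun u => iter (pm s0) (kernel P π₁p π₂p) m u - dstat π₁p π₂p u)
            (kernel P π₁p π₂p) s'
            = vmul (iter (pm s0) (kernel P π₁p π₂p) m) (kernel P π₁p π₂p) s'
              - vmul (dstat π₁p π₂p) (kernel P π₁p π₂p) s' :=
          (congrFun (vmul_sub_eq (iter (pm s0) (kernel P π₁p π₂p) m) (dstat π₁p π₂p)
            (kernel P π₁p π₂p)) s').symm
        show (vmul (iter (pm s0) (kernel P π₁t π₂t) m) (kernel P π₁t π₂t) s'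
            - dstat π₁t π₂t s')
            - (vmul (iter (pm s0) (kernel P π₁p π₂p) m) (kernel P π₁p π₂p) s'
            - dstat π₁p π₂p s') = _
        rw [h5, h6, ← h3, ← h4]
        ring
      rw [hdec]
      have hA : l1 (fun s' =>
            vmul (iter (pm s0) (kernel P π₁t π₂t) m) (kernel P π₁t π₂t) s'
              + vmul (dstat π₁p π₂p) (kernel P π₁t π₂t) s'
              - vmul (dstat π₁t π₂t) (kernel P π₁t π₂t) s'
              - vmul (iter (pm s0) (kernel P π₁p π₂p) m) (kernel P π₁t π₂t) s')
          ≤ γ * l1 (fun s' => (iter (pm s0) (kernel P π₁t π₂t) m s' - dstat π₁t π₂t s')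
              - (iter (pm s0) (kernel P π₁p π₂p) m s' - dstat π₁p π₂p s')) := by
        refine le_trans (contr_four hcT hxm hdtP hdpP hym) ?_
        have e : (fun u => iter (pm s0) (kernel P π₁t π₂t) m u + dstat π₁p π₂p u
            - dstat π₁t π₂t u - iter (pm s0) (kernel P π₁p π₂p) m u)
            = fun u => (iter (pm s0) (kernel P π₁t π₂t) m u - dstat π₁t π₂t u)
              - (iter (pm s0) (kernel P π₁p π₂p) m u - dstat π₁p π₂p u) := by
          funext u; ring
        rw [e]
      have hB : l1 (fun s' =>
            vmul (fun u => iter (pm s0) (kernel P π₁p π₂p) m u - dstat π₁p π₂p u)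
              (kernel P π₁t π₂t) s'
            - vmul (fun u => iter (pm s0) (kernel P π₁p π₂p) m u - dstat π₁p π₂p u)
              (kernel P π₁p π₂p) s')
          ≤ (γ ^ m * 2) * (ρ₁ + I₂ * ρ₂) := by
        refine le_trans (l1_vmul_sub_le _ _ _) ?_
        refine mul_le_mul ?_ hKd (kdist_nonneg' _ _) (by positivity)
        exact l1_iter_sub hγ0 hcP hKpS hdpP (isProbVec_pm s0) hdpS m
      have hmono := mul_le_mul_of_nonneg_left ih hγ0
      have hcomb := le_trans (l1_add_le _ _) (add_le_add (le_trans hA hmono) hB)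
      refine le_trans hcomb ?_
      have hpow : γ * ((m : ℝ) * γ ^ (m - 1)) = (m : ℝ) * γ ^ m := by
        cases m with
        | zero => simp
        | succ k =>
          rw [Nat.add_sub_cancel, pow_succ]
          ring
      have hps : γ ^ (m + 1) = γ ^ m * γ := pow_succ γ m
      rw [Nat.add_sub_cancel]
      push_cast
      refine le_of_eq ?_
      linear_combination (2 * (ρ₁ + I₂ * ρ₂)) * hpow
        + ((ρ₁ + I₂ * ρ₂) / (1 - γ)) * hps
  -- bias difference bound
  have hsumφ1 : Summable (fun m : ℕ =>
      ((ρ₁ + I₂ * ρ₂) / (1 - γ) + 2 * (ρ₁ + ρ₂)) * γ ^ m) :=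
    (summable_geometric_of_lt_one hγ0 hγ1).mul_left _
  have hsumφ2 : Summable (fun m : ℕ =>
      (2 * (ρ₁ + I₂ * ρ₂)) * ((m : ℝ) * γ ^ (m - 1))) :=
    (summable_nat_geo hγ0 hγ1).mul_left _
  have hsumφ : Summable (fun m : ℕ =>
      ((ρ₁ + I₂ * ρ₂) / (1 - γ) + 2 * (ρ₁ + ρ₂)) * γ ^ m
      + (2 * (ρ₁ + I₂ * ρ₂)) * ((m : ℝ) * γ ^ (m - 1))) := hsumφ1.add hsumφ2
  have hgdiff : ∀ s', |gfun r π₁t π₂t s' - gfun r π₁p π₂p s'| ≤ ρ₁ + ρ₂ := by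
    intro s'
    refine le_trans (gfun_diff_le hr hπ₁t hπ₁p hπ₂t hπ₂p s') ?_
    exact add_le_add hρ₁ hρ₂
  have hbiasdiff : ∀ s0 : S,
      |bias P r dstat π₁t π₂t s0 - bias P r dstat π₁p π₂p s0|
      ≤ 3 * (ρ₁ + I₂ * ρ₂) / (1 - γ) ^ 2 + 2 * (ρ₁ + ρ₂) / (1 - γ) := by
    intro s0
    rw [bias, bias, ← Summable.tsum_sub (hsumm π₁t π₂t hπ₁t hπ₂t s0) (hsumm π₁p π₂p hπ₁p hπ₂p s0)]
    refine le_trans (abs_tsum_le_of_le hsumφ ?_) ?_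
    · intro m
      have e : (dot (iter (pm s0) (kernel P π₁t π₂t) m) (gfun r π₁t π₂t)
            - eta r dstat π₁t π₂t)
          - (dot (iter (pm s0) (kernel P π₁p π₂p) m) (gfun r π₁p π₂p)
            - eta r dstat π₁p π₂p)
          = dot (fun s' => iter (pm s0) (kernel P π₁t π₂t) m s' - dstat π₁t π₂t s')
              (fun s' => gfun r π₁t π₂t s' - gfun r π₁p π₂p s')
          + dot (fun s' => (iter (pm s0) (kernel P π₁t π₂t) m s' - dstat π₁t π₂t s')
              - (iter (pm s0) (kernel P π₁p π₂p) m s' - dstat π₁p π₂p s'))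
              (gfun r π₁p π₂p) := by
        rw [hterm π₁t π₂t s0 m, hterm π₁p π₂p s0 m, dot, dot, dot, dot,
          ← Finset.sum_sub_distrib, ← Finset.sum_add_distrib]
        exact Finset.sum_congr rfl fun s' _ => by ring
      rw [e]
      refine le_trans (abs_add_le _ _) ?_
      have b1 : |dot (fun s' => iter (pm s0) (kernel P π₁t π₂t) m s' - dstat π₁t π₂t s')
          (fun s' => gfun r π₁t π₂t s' - gfun r π₁p π₂p s')| ≤ (γ ^ m * 2) * (ρ₁ + ρ₂) := by
        refine le_trans (abs_dot_le _ _ hgdiff) ?_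
        refine mul_le_mul_of_nonneg_right ?_ (by positivity)
        exact l1_iter_sub hγ0 hcT hKtS hdtP (isProbVec_pm s0) hdtS m
      have b2 : |dot (fun s' => (iter (pm s0) (kernel P π₁t π₂t) m s' - dstat π₁t π₂t s')
          - (iter (pm s0) (kernel P π₁p π₂p) m s' - dstat π₁p π₂p s'))
          (gfun r π₁p π₂p)|
          ≤ γ ^ m * ((ρ₁ + I₂ * ρ₂) / (1 - γ))
            + 2 * (m : ℝ) * γ ^ (m - 1) * (ρ₁ + I₂ * ρ₂) := by
        refine le_trans (abs_dot_le _ _ (gfun_abs_le_one hr hπ₁p hπ₂p)) ?_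
        rw [mul_one]
        exact hzb s0 m
      refine le_trans (add_le_add b1 b2) (le_of_eq ?_)
      ring
    · rw [Summable.tsum_add hsumφ1 hsumφ2, tsum_mul_left, tsum_mul_left,
        tsum_geometric_of_lt_one hγ0 hγ1, tsum_nat_geo hγ0 hγ1]
      refine le_of_eq ?_
      field_simp
      ring
  -- final assembly
  have hKrtP : IsProbVec (fun s' => ∑ a₂, π₂t s a₂ * P s a₁ a₂ s') := by
    constructor
    · intro s'
      exact Finset.sum_nonneg fun a₂ _ => mul_nonneg ((hπ₂t s).1 a₂) ((hP s a₁ a₂).1 s')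
    · calc ∑ s', ∑ a₂, π₂t s a₂ * P s a₁ a₂ s'
          = ∑ a₂, ∑ s', π₂t s a₂ * P s a₁ a₂ s' := Finset.sum_comm
        _ = ∑ a₂, π₂t s a₂ := Finset.sum_congr rfl fun a₂ _ => by
            rw [← Finset.mul_sum, (hP s a₁ a₂).2, mul_one]
        _ = 1 := (hπ₂t s).2
  have hA : |(∑ a₂, π₂t s a₂ * r s a₁ a₂) - ∑ a₂, π₂p s a₂ * r s a₁ a₂| ≤ ρ₂ := by
    rw [← Finset.sum_sub_distrib]
    refine le_trans (Finset.abs_sum_le_sum_abs _ _) ?_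
    refine le_trans ?_ (le_trans (le_fmax (fun u => ∑ a, |π₂t u a - π₂p u a|) s) hρ₂)
    refine Finset.sum_le_sum fun a₂ _ => ?_
    have h5 : |r s a₁ a₂| ≤ 1 := by
      rw [abs_of_nonneg (hr s a₁ a₂).1]; exact (hr s a₁ a₂).2
    calc |π₂t s a₂ * r s a₁ a₂ - π₂p s a₂ * r s a₁ a₂|
        = |π₂t s a₂ - π₂p s a₂| * |r s a₁ a₂| := by rw [← sub_mul, abs_mul]
      _ ≤ |π₂t s a₂ - π₂p s a₂| := mul_le_of_le_one_right (abs_nonneg _) h5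
  have hη : |eta r dstat π₁t π₂t - eta r dstat π₁p π₂p|
      ≤ (ρ₁ + I₂ * ρ₂) / (1 - γ) + (ρ₁ + ρ₂) := by
    have e : eta r dstat π₁t π₂t - eta r dstat π₁p π₂p
        = dot (fun u => dstat π₁t π₂t u - dstat π₁p π₂p u) (gfun r π₁t π₂t)
        + dot (dstat π₁p π₂p) (fun u => gfun r π₁t π₂t u - gfun r π₁p π₂p u) := by
      rw [eta, eta, dot, dot, ← Finset.sum_sub_distrib, ← Finset.sum_add_distrib]
      exact Finset.sum_congr rfl fun u _ => by ring
    rw [e]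
    refine le_trans (abs_add_le _ _) (add_le_add ?_ ?_)
    · refine le_trans (abs_dot_le _ _ (gfun_abs_le_one hr hπ₁t hπ₂t)) ?_
      rw [mul_one]
      exact hdd
    · refine le_trans (abs_dot_le _ _ hgdiff) ?_
      rw [l1_of_prob hdpP, one_mul]
  have hC1 : |∑ s', (∑ a₂, π₂t s a₂ * P s a₁ a₂ s')
        * (bias P r dstat π₁t π₂t s' - bias P r dstat π₁p π₂p s')|
      ≤ 3 * (ρ₁ + I₂ * ρ₂) / (1 - γ) ^ 2 + 2 * (ρ₁ + ρ₂) / (1 - γ) := by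
    refine le_trans (abs_dot_le (fun s' => ∑ a₂, π₂t s a₂ * P s a₁ a₂ s') _ hbiasdiff) ?_
    rw [l1_of_prob hKrtP, one_mul]
  have hKrd : l1 (fun s' => (∑ a₂, π₂t s a₂ * P s a₁ a₂ s')
      - ∑ a₂, π₂p s a₂ * P s a₁ a₂ s') ≤ ρ₂ := by
    refine le_trans ?_ (le_trans (le_fmax (fun u => ∑ a, |π₂t u a - π₂p u a|) s) hρ₂)
    calc l1 (fun s' => (∑ a₂, π₂t s a₂ * P s a₁ a₂ s') - ∑ a₂, π₂p s a₂ * P s a₁ a₂ s')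
        = ∑ s', |∑ a₂, (π₂t s a₂ - π₂p s a₂) * P s a₁ a₂ s'| := by
          rw [l1]
          refine Finset.sum_congr rfl fun s' _ => ?_
          rw [← Finset.sum_sub_distrib]
          congr 1
          exact Finset.sum_congr rfl fun a₂ _ => by ring
      _ ≤ ∑ s', ∑ a₂, |π₂t s a₂ - π₂p s a₂| * P s a₁ a₂ s' := by
          refine Finset.sum_le_sum fun s' _ => ?_
          refine le_trans (Finset.abs_sum_le_sum_abs _ _) ?_
          refine Finset.sum_le_sum fun a₂ _ => ?_
          rw [abs_mul, abs_of_nonneg ((hP s a₁ a₂).1 s')]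
      _ = ∑ a₂, ∑ s', |π₂t s a₂ - π₂p s a₂| * P s a₁ a₂ s' := Finset.sum_comm
      _ = ∑ a₂, |π₂t s a₂ - π₂p s a₂| := Finset.sum_congr rfl fun a₂ _ => by
          rw [← Finset.mul_sum, (hP s a₁ a₂).2, mul_one]
  have hC2 : |∑ s', ((∑ a₂, π₂t s a₂ * P s a₁ a₂ s') - ∑ a₂, π₂p s a₂ * P s a₁ a₂ s')
        * bias P r dstat π₁p π₂p s'| ≤ ρ₂ * (2 / (1 - γ)) := by
    refine le_trans (abs_dot_le _ _ (hbiasabs π₁p π₂p hπ₁p hπ₂p)) ?_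
    exact mul_le_mul_of_nonneg_right hKrd (by positivity)
  -- put the pieces together
  have edec : qval P r dstat π₁t π₂t s a₁ - qval P r dstat π₁p π₂p s a₁
      = ((∑ a₂, π₂t s a₂ * r s a₁ a₂) - ∑ a₂, π₂p s a₂ * r s a₁ a₂)
      - (eta r dstat π₁t π₂t - eta r dstat π₁p π₂p)
      + (∑ s', (∑ a₂, π₂t s a₂ * P s a₁ a₂ s')
          * (bias P r dstat π₁t π₂t s' - bias P r dstat π₁p π₂p s'))
      + ∑ s', ((∑ a₂, π₂t s a₂ * P s a₁ a₂ s') - ∑ a₂, π₂p s a₂ * P s a₁ a₂ s')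
          * bias P r dstat π₁p π₂p s' := by
    simp only [qval]
    have e2 : (∑ s', (∑ a₂, π₂t s a₂ * P s a₁ a₂ s') * bias P r dstat π₁t π₂t s')
        - ∑ s', (∑ a₂, π₂p s a₂ * P s a₁ a₂ s') * bias P r dstat π₁p π₂p s'
        = (∑ s', (∑ a₂, π₂t s a₂ * P s a₁ a₂ s')
            * (bias P r dstat π₁t π₂t s' - bias P r dstat π₁p π₂p s'))
        + ∑ s', ((∑ a₂, π₂t s a₂ * P s a₁ a₂ s') - ∑ a₂, π₂p s a₂ * P s a₁ a₂ s')
            * bias P r dstat π₁p π₂p s' := by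
      rw [← Finset.sum_add_distrib, ← Finset.sum_sub_distrib]
      exact Finset.sum_congr rfl fun s' _ => by ring
    linear_combination e2
  rw [edec]
  have hfinal := abs_add_le (((∑ a₂, π₂t s a₂ * r s a₁ a₂) - ∑ a₂, π₂p s a₂ * r s a₁ a₂)
      - (eta r dstat π₁t π₂t - eta r dstat π₁p π₂p)
      + (∑ s', (∑ a₂, π₂t s a₂ * P s a₁ a₂ s')
          * (bias P r dstat π₁t π₂t s' - bias P r dstat π₁p π₂p s')))
    (∑ s', ((∑ a₂, π₂t s a₂ * P s a₁ a₂ s') - ∑ a₂, π₂p s a₂ * P s a₁ a₂ s')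
          * bias P r dstat π₁p π₂p s')
  have hfinal2 := abs_add_le (((∑ a₂, π₂t s a₂ * r s a₁ a₂) - ∑ a₂, π₂p s a₂ * r s a₁ a₂)
      - (eta r dstat π₁t π₂t - eta r dstat π₁p π₂p))
    (∑ s', (∑ a₂, π₂t s a₂ * P s a₁ a₂ s')
          * (bias P r dstat π₁t π₂t s' - bias P r dstat π₁p π₂p s'))
  have hfinal3 := abs_sub ((∑ a₂, π₂t s a₂ * r s a₁ a₂) - ∑ a₂, π₂p s a₂ * r s a₁ a₂)
    (eta r dstat π₁t π₂t - eta r dstat π₁p π₂p)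
  have heq : (ρ₁ + I₂ * ρ₂ + 2 * ρ₂) / (1 - γ)
      = (ρ₁ + I₂ * ρ₂) / (1 - γ) + ρ₂ * (2 / (1 - γ)) := by
    field_simp
  linarith [hA, hη, hC1, hC2]
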